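/- arXiv:2406.01234 — 7 statements merged into one kernel-verified Lean document; each statement's English description precedes it below -/
import Mathlib

section
/- Let S be a finite nonempty set and H ⊆ ℝ^S a nonempty set that is translation-closed: h ∈ H and λ ∈ ℝ imply h + λe ∈ H. Suppose Γ : ℝ^S → ℝ^S is such that for every u ∈ ℝ^S, Γu is the greatest element of {v ∈ H : v ≤ u}. Then Γ is non-expansive for the supremum norm: ‖Γu − Γv‖_∞ ≤ ‖u − v‖_∞ for all u, v ∈ ℝ^S; in particular Γ is continuous. -/
/-!
Since `H` is closed under subtracting constants, `Γ v - c` lies in `H`; if `v ≤ u + c` it also lies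
below `u`, hence below the greatest such element `Γ u`. Applying this with `c = ‖u - v‖` in both
directions bounds every coordinate of `Γ u - Γ v` by `‖u - v‖` in absolute value.
-/

open Function

section GreatestMinorant

variable {S α : Type*} [AddCommGroup α] [PartialOrder α] [IsOrderedAddMonoid α]
  {H : Set (S → α)} {Γ : (S → α) → (S → α)}

theorem le_add_const_of_isGreatest_minorant
    (htrans : ∀ h ∈ H, ∀ c : α, h + const S c ∈ H)
    (hΓ : ∀ u, IsGreatest {v | v ∈ H ∧ v ≤ u} (Γ u))
    {u v : S → α} {c : α} (hvu : v ≤ u + const S c) :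
    Γ v ≤ Γ u + const S c := by
  have hmem : Γ v - const S c ∈ H := by
    convert htrans _ (hΓ v).1.1 (-c) using 1
    ext; simp [sub_eq_add_neg]
  have hle : Γ v - const S c ≤ u := sub_le_iff_le_add.mpr ((hΓ v).1.2.trans hvu)
  exact sub_le_iff_le_add.mp ((hΓ u).2 ⟨hmem, hle⟩)

end GreatestMinorant

section SupNorm

variable {S : Type*} [Fintype S]

theorem le_add_const_norm_sub (u v : S → ℝ) : v ≤ u + const S ‖u - v‖ := fun s => by
  have hs : |u s - v s| ≤ ‖u - v‖ := norm_le_pi_norm (u - v) s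
  simp only [Pi.add_apply, const_apply]
  linarith [neg_abs_le (u s - v s)]

theorem norm_sub_le_of_le_add_const {Γ : (S → ℝ) → (S → ℝ)}
    (hΓ : ∀ u v c, v ≤ u + const S c → Γ v ≤ Γ u + const S c) (u v : S → ℝ) :
    ‖Γ u - Γ v‖ ≤ ‖u - v‖ := by
  refine (pi_norm_le_iff_of_nonneg (norm_nonneg _)).mpr fun s => ?_
  have hvu := hΓ u v _ (le_add_const_norm_sub u v) s
  have huv := hΓ v u _ (le_add_const_norm_sub v u) s
  rw [norm_sub_rev v u] at huv
  simp only [Pi.add_apply, const_apply] at hvu huv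
  rw [Pi.sub_apply, Real.norm_eq_abs, abs_le]
  constructor <;> linarith

end SupNorm

theorem stmt3_general {S : Type*} [Fintype S]
    (H : Set (S → ℝ))
    (htrans : ∀ h ∈ H, ∀ c : ℝ, (h + fun _ => c) ∈ H)
    (Γ : (S → ℝ) → (S → ℝ))
    (hΓ : ∀ u : S → ℝ, Γ u ∈ H ∧ Γ u ≤ u ∧ ∀ v ∈ H, v ≤ u → v ≤ Γ u) :
    (∀ u v : S → ℝ, ‖Γ u - Γ v‖ ≤ ‖u - v‖) ∧ Continuous Γ := by
  have hgreatest : ∀ u, IsGreatest {v | v ∈ H ∧ v ≤ u} (Γ u) := fun u =>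
    ⟨⟨(hΓ u).1, (hΓ u).2.1⟩, fun v hv => (hΓ u).2.2 v hv.1 hv.2⟩
  have hnonexp := norm_sub_le_of_le_add_const fun _ _ _ =>
    le_add_const_of_isGreatest_minorant htrans hgreatest
  refine ⟨hnonexp, (LipschitzWith.of_dist_le_mul (K := 1) fun u v => ?_).continuous⟩
  simpa [dist_eq_norm] using hnonexp u v

/-- the projection `Γ u := max {v ∈ H : v ≤ u}` onto a nonempty
translation-closed set `H` is non-expansive for the supremum norm, and in
particular continuous. -/
theorem stmt3 {S : Type*} [Fintype S] [Nonempty S]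
    (H : Set (S → ℝ)) (hne : H.Nonempty)
    (htrans : ∀ h ∈ H, ∀ c : ℝ, (h + fun _ => c) ∈ H)
    (Γ : (S → ℝ) → (S → ℝ))
    (hΓ : ∀ u : S → ℝ, Γ u ∈ H ∧ Γ u ≤ u ∧ ∀ v ∈ H, v ≤ u → v ≤ Γ u) :
    (∀ u v : S → ℝ, ‖Γ u - Γ v‖ ≤ ‖u - v‖) ∧ Continuous Γ :=
  stmt3_general H htrans Γ hΓ
end

section
/- In the setting of the β-mitigated extended Bellman operator, assume each reward set R(s,a) is nonempty and compact and each kernel set P(s,a) is a nonempty compact convex set of probability vectors on S. Then L^β is non-span-expansive: for all u, v ∈ ℝ^S, sp(L^β u − L^β v) ≤ sp(u − v). -/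
/-!
Comparing `L^β u` with `L^β v` term by term: for a probability vector `q`,
`q·u - q·v ≤ max (u - v)`, and `min` is monotone and commutes with adding a constant, so every
candidate value `r̃ + min (p̃·u) (p̂·u + β)` exceeds the matching candidate for `v` by at most
`max (u - v)`. Taking suprema gives `L^β u - L^β v ≤ max (u - v)` pointwise; exchanging `u` and
`v` gives `L^β u - L^β v ≥ min (u - v)`, and the span bound follows.
-/

/-- The span of a vector `u ∈ ℝ^S`: `sp u = max u - min u`. -/
noncomputable def sp {S : Type*} [Fintype S] [Nonempty S] (u : S → ℝ) : ℝ :=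
  (⨆ s, u s) - ⨅ s, u s

/-- The β-mitigated extended Bellman operator:
`L^β u (s) = max_{a} sup_{r̃ ∈ R(s,a)} sup_{p̃ ∈ P(s,a)}
    (r̃ + min (p̃·u) (p̂(s,a)·u + β(s,a)))`. -/
noncomputable def Lbeta {S : Type*} [Fintype S] {A : S → Type*}
    (R : ∀ s : S, A s → Set ℝ) (P : ∀ s : S, A s → Set (S → ℝ))
    (phat : ∀ s : S, A s → S → ℝ) (β : ∀ s : S, A s → ℝ)
    (u : S → ℝ) (s : S) : ℝ :=
  ⨆ a : A s, sSup {x : ℝ | ∃ r ∈ R s a, ∃ p ∈ P s a,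
    x = r + min (∑ s', p s' * u s') ((∑ s', phat s a s' * u s') + β s a)}

open Finset

lemma sum_mul_le_iSup {S : Type*} [Fintype S] [Nonempty S] {p : S → ℝ}
    (hp0 : ∀ s, 0 ≤ p s) (hp1 : ∑ s, p s = 1) (w : S → ℝ) :
    ∑ s, p s * w s ≤ ⨆ s, w s :=
  calc ∑ s, p s * w s ≤ ∑ s, p s * ⨆ t, w t :=
        sum_le_sum fun s _ =>
          mul_le_mul_of_nonneg_left (le_ciSup (Finite.bddAbove_range w) s) (hp0 s)
    _ = ⨆ t, w t := by rw [← sum_mul, hp1, one_mul]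

lemma sum_mul_sub_sum_mul_le_iSup {S : Type*} [Fintype S] [Nonempty S] {p : S → ℝ}
    (hp0 : ∀ s, 0 ≤ p s) (hp1 : ∑ s, p s = 1) (u v : S → ℝ) :
    ∑ s, p s * u s - ∑ s, p s * v s ≤ ⨆ s, (u s - v s) := by
  rw [← sum_sub_distrib]
  simp_rw [← mul_sub]
  exact sum_mul_le_iSup hp0 hp1 _

lemma min_le_min_add {a b c d M : ℝ} (hac : a ≤ c + M) (hbd : b ≤ d + M) :
    min a b ≤ min c d + M :=
  min_add_add_right c d M ▸ min_le_min hac hbd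

lemma csSup_le_csSup_add {X Y : Set ℝ} {M : ℝ} (hX : X.Nonempty) (hY : BddAbove Y)
    (h : ∀ x ∈ X, ∃ y ∈ Y, x ≤ y + M) : sSup X ≤ sSup Y + M :=
  csSup_le hX fun x hx =>
    let ⟨_, hy, hxy⟩ := h x hx
    hxy.trans (add_le_add_left (le_csSup hY hy) M)

lemma ciSup_le_ciSup_add {ι : Type*} [Finite ι] [Nonempty ι] {f g : ι → ℝ} {M : ℝ}
    (h : ∀ i, f i ≤ g i + M) : ⨆ i, f i ≤ (⨆ i, g i) + M :=
  ciSup_le fun i => (h i).trans (add_le_add_left (le_ciSup (Finite.bddAbove_range g) i) M)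

lemma sp_sub_le_of_forall_sub_le_iSup {S : Type*} [Fintype S] [Nonempty S]
    {T : (S → ℝ) → S → ℝ} (hT : ∀ u v s, T u s - T v s ≤ ⨆ t, (u t - v t)) (u v : S → ℝ) :
    sp (T u - T v) ≤ sp (u - v) := by
  simp only [sp, Pi.sub_apply]
  have hsup : ⨆ s, (T u s - T v s) ≤ ⨆ s, (u s - v s) := ciSup_le (hT u v)
  have hinf : ⨅ s, (u s - v s) ≤ ⨅ s, (T u s - T v s) := by
    have hvu : ⨆ t, (v t - u t) ≤ -⨅ t, (u t - v t) := ciSup_le fun t => by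
      linarith [ciInf_le (Finite.bddBelow_range fun t => u t - v t) t]
    exact le_ciInf fun s => by linarith [hT v u s]
  linarith

section Bellman

variable {S : Type*} [Fintype S] {A : S → Type*}
  (R : ∀ s : S, A s → Set ℝ) (P : ∀ s : S, A s → Set (S → ℝ))
  (phat : ∀ s : S, A s → S → ℝ) (β : ∀ s : S, A s → ℝ)

def bellmanValues (u : S → ℝ) (s : S) (a : A s) : Set ℝ :=
  {x : ℝ | ∃ r ∈ R s a, ∃ p ∈ P s a,
    x = r + min (∑ s', p s' * u s') ((∑ s', phat s a s' * u s') + β s a)}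

lemma Lbeta_eq_iSup_sSup_bellmanValues (u : S → ℝ) (s : S) :
    Lbeta R P phat β u s = ⨆ a, sSup (bellmanValues R P phat β u s a) :=
  rfl

variable {R P}

lemma bellmanValues_nonempty {s : S} {a : A s} (hR : (R s a).Nonempty) (hP : (P s a).Nonempty)
    (u : S → ℝ) : (bellmanValues R P phat β u s a).Nonempty :=
  let ⟨r, hr⟩ := hR
  let ⟨p, hp⟩ := hP
  ⟨_, r, hr, p, hp, rfl⟩

lemma bddAbove_bellmanValues {s : S} {a : A s} (hR : BddAbove (R s a)) (u : S → ℝ) :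
    BddAbove (bellmanValues R P phat β u s a) := by
  refine ⟨sSup (R s a) + ((∑ s', phat s a s' * u s') + β s a), ?_⟩
  rintro _ ⟨r, hr, p, -, rfl⟩
  exact add_le_add (le_csSup hR hr) (min_le_right _ _)

lemma exists_bellmanValues_le_add_iSup [Nonempty S] {s : S} {a : A s}
    (hP : ∀ p ∈ P s a, (∀ s', 0 ≤ p s') ∧ ∑ s', p s' = 1)
    (hphat : (∀ s', 0 ≤ phat s a s') ∧ ∑ s', phat s a s' = 1) (u v : S → ℝ) :
    ∀ x ∈ bellmanValues R P phat β u s a,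
      ∃ y ∈ bellmanValues R P phat β v s a, x ≤ y + ⨆ t, (u t - v t) := by
  rintro _ ⟨r, hr, p, hp, rfl⟩
  refine ⟨_, ⟨r, hr, p, hp, rfl⟩, ?_⟩
  have hdot := sum_mul_sub_sum_mul_le_iSup (hP p hp).1 (hP p hp).2 u v
  have hdot_hat := sum_mul_sub_sum_mul_le_iSup hphat.1 hphat.2 u v
  rw [add_assoc]
  gcongr
  exact min_le_min_add (by linarith) (by linarith)

lemma Lbeta_sub_Lbeta_le_iSup [Nonempty S] [∀ s, Finite (A s)] [∀ s, Nonempty (A s)]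
    (hRne : ∀ s a, (R s a).Nonempty) (hRbdd : ∀ s a, BddAbove (R s a))
    (hPne : ∀ s a, (P s a).Nonempty)
    (hP : ∀ s a, ∀ p ∈ P s a, (∀ s', 0 ≤ p s') ∧ ∑ s', p s' = 1)
    (hphat : ∀ s a, (∀ s', 0 ≤ phat s a s') ∧ ∑ s', phat s a s' = 1) (u v : S → ℝ) (s : S) :
    Lbeta R P phat β u s - Lbeta R P phat β v s ≤ ⨆ t, (u t - v t) := by
  simp only [Lbeta_eq_iSup_sSup_bellmanValues, sub_le_iff_le_add']
  exact ciSup_le_ciSup_add fun a =>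
    csSup_le_csSup_add (bellmanValues_nonempty phat β (hRne s a) (hPne s a) u)
      (bddAbove_bellmanValues phat β (hRbdd s a) v)
      (exists_bellmanValues_le_add_iSup phat β (hP s a) (hphat s a) u v)

end Bellman

theorem stmt5_general {S : Type*} [Fintype S] [Nonempty S]
    {A : S → Type*} [∀ s, Fintype (A s)] [∀ s, Nonempty (A s)]
    (R : ∀ s : S, A s → Set ℝ) (P : ∀ s : S, A s → Set (S → ℝ))
    (phat : ∀ s : S, A s → S → ℝ) (β : ∀ s : S, A s → ℝ)
    (hRne : ∀ s a, (R s a).Nonempty) (hRcomp : ∀ s a, IsCompact (R s a))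
    (hPne : ∀ s a, (P s a).Nonempty)
    (hP : ∀ s a, ∀ p ∈ P s a, (∀ s', 0 ≤ p s') ∧ ∑ s', p s' = 1)
    (hphat : ∀ s a, (∀ s', 0 ≤ phat s a s') ∧ ∑ s', phat s a s' = 1) :
    ∀ u v : S → ℝ,
      sp (Lbeta R P phat β u - Lbeta R P phat β v) ≤ sp (u - v) :=
  sp_sub_le_of_forall_sub_le_iSup
    (Lbeta_sub_Lbeta_le_iSup phat β hRne (fun s a => (hRcomp s a).bddAbove) hPne hP hphat)

/-- if each `R(s,a)` is nonempty compact and each `P(s,a)` is a nonempty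
compact convex set of probability vectors, then `L^β` is non-span-expansive. -/
theorem stmt5 {S : Type*} [Fintype S] [Nonempty S]
    {A : S → Type*} [∀ s, Fintype (A s)] [∀ s, Nonempty (A s)]
    (R : ∀ s : S, A s → Set ℝ) (P : ∀ s : S, A s → Set (S → ℝ))
    (phat : ∀ s : S, A s → S → ℝ) (β : ∀ s : S, A s → ℝ)
    (hRne : ∀ s a, (R s a).Nonempty) (hRcomp : ∀ s a, IsCompact (R s a))
    (hPne : ∀ s a, (P s a).Nonempty) (hPcomp : ∀ s a, IsCompact (P s a))
    (hPconv : ∀ s a, Convex ℝ (P s a))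
    (hP : ∀ s a, ∀ p ∈ P s a, (∀ s', 0 ≤ p s') ∧ ∑ s', p s' = 1)
    (hphat : ∀ s a, (∀ s', 0 ≤ phat s a s') ∧ ∑ s', phat s a s' = 1)
    (hβ : ∀ s a, 0 ≤ β s a) :
    ∀ u v : S → ℝ,
      sp (Lbeta R P phat β u - Lbeta R P phat β v) ≤ sp (u - v) :=
  stmt5_general R P phat β hRne hRcomp hPne hP hphat
end

section
/- Let S be a finite nonempty set and F : ℝ^S → ℝ^S a map that is monotone (u ≤ v pointwise implies F(u) ≤ F(v)) and satisfies F(u + λe) = F(u) + λe for all u and λ ∈ ℝ. Suppose u ∈ ℝ^S and g ∈ ℝ satisfy F(u) = u + g·e. Then for every v ∈ ℝ^S and every n ∈ ℕ, setting c := ‖v − u‖_∞, one has u + (n·g − c)·e ≤ Fⁿ(v) ≤ u + (n·g + c)·e, where Fⁿ denotes the n-fold iterate of F. -/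
/-!
Since `F` commutes with adding constants and is monotone, so does every iterate `Fⁿ`; from
`F u = u + g·e` we get `Fⁿ u = u + n g·e`. Sandwiching `v` between `u ± ‖v - u‖_∞·e` and applying
`Fⁿ` gives the bounds.
-/

theorem Function.iterate_eq_add_nsmul_of_commute {M : Type*} [AddMonoid M] {f : M → M} {x b : M}
    (hf : Function.Commute f (· + b)) (hx : f x = x + b) (n : ℕ) :
    f^[n] x = x + n • b := by
  induction n with
  | zero => simp
  | succ n ih =>
    rw [Function.iterate_succ_apply, hx, (hf.iterate_left n).eq, ih, succ_nsmul, add_assoc]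

theorem Pi.add_const_neg_norm_sub_le {ι : Type*} [Fintype ι] (u v : ι → ℝ) :
    (u + fun _ => -‖v - u‖) ≤ v := fun i => by
  have := (abs_le.mp (norm_le_pi_norm (v - u) i)).1
  simp only [Pi.add_apply, Pi.sub_apply] at this ⊢
  linarith

theorem Pi.le_add_const_norm_sub {ι : Type*} [Fintype ι] (u v : ι → ℝ) :
    v ≤ u + fun _ => ‖v - u‖ := fun i => by
  have := (abs_le.mp (norm_le_pi_norm (v - u) i)).2
  simp only [Pi.add_apply, Pi.sub_apply] at this ⊢
  linarith

theorem stmt8_general {S : Type*} [Fintype S]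
    (F : (S → ℝ) → (S → ℝ)) (hmono : Monotone F)
    (hshift : ∀ (u : S → ℝ) (c : ℝ), F (u + fun _ => c) = F u + fun _ => c)
    (u : S → ℝ) (g : ℝ) (hfix : F u = u + fun _ => g)
    (v : S → ℝ) (n : ℕ) :
    (u + fun _ => (n : ℝ) * g - ‖v - u‖) ≤ F^[n] v ∧
      F^[n] v ≤ u + fun _ => (n : ℝ) * g + ‖v - u‖ := by
  have hcomm (a : ℝ) : Function.Commute F (· + fun _ => a) := fun w => hshift w a
  have hshift_iter (a : ℝ) (w : S → ℝ) : F^[n] (w + fun _ => a) = F^[n] w + fun _ => a :=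
    ((hcomm a).iterate_left n).eq w
  have hFu : F^[n] u = u + fun _ => (n : ℝ) * g := by
    rw [Function.iterate_eq_add_nsmul_of_commute (hcomm g) hfix n]
    funext s
    simp
  have hrepr (a : ℝ) : (u + fun _ => (n : ℝ) * g + a) = F^[n] (u + fun _ => a) := by
    rw [hshift_iter, hFu, add_assoc]
    rfl
  constructor
  · rw [sub_eq_add_neg, hrepr]
    exact hmono.iterate n (Pi.add_const_neg_norm_sub_le u v)
  · rw [hrepr]
    exact hmono.iterate n (Pi.le_add_const_norm_sub u v)

/-- if `F` is monotone and shift-equivariant with span fix-point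
`F u = u + g·e`, then for every `v` and `n`, with `c = ‖v - u‖_∞`,
`u + (n·g - c)·e ≤ Fⁿ v ≤ u + (n·g + c)·e`. -/
theorem stmt8 {S : Type*} [Fintype S] [Nonempty S]
    (F : (S → ℝ) → (S → ℝ)) (hmono : Monotone F)
    (hshift : ∀ (u : S → ℝ) (c : ℝ), F (u + fun _ => c) = F u + fun _ => c)
    (u : S → ℝ) (g : ℝ) (hfix : F u = u + fun _ => g)
    (v : S → ℝ) (n : ℕ) :
    (u + fun _ => (n : ℝ) * g - ‖v - u‖) ≤ F^[n] v ∧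
      F^[n] v ≤ u + fun _ => (n : ℝ) * g + ‖v - u‖ :=
  stmt8_general F hmono hshift u g hfix v n
end

section
/- Let S be a finite nonempty set and F : ℝ^S → ℝ^S a map that is monotone (u ≤ v pointwise implies F(u) ≤ F(v)) and satisfies F(u + λe) = F(u) + λe for all u and λ ∈ ℝ. If u, u' ∈ ℝ^S and g, g' ∈ ℝ satisfy F(u) = u + g·e and F(u') = u' + g'·e, then g = g'. In other words, all span fix-points of F have the same growth (gain). -/
/-! Compare a span fix-point `u` with `u'` through the largest gap `c = max (u - u')`,
attained at some `s`. Since `u ≤ u' + c`, monotonicity and shift-equivariance give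
`u + g = F u ≤ F u' + c = u' + g' + c`, and at `s` this reads `g ≤ g'`. By symmetry `g = g'`. -/

section SpanFixPoint

variable {S : Type*} {F : (S → ℝ) → (S → ℝ)}

lemma le_add_const_of_monotone_of_shift (hmono : Monotone F)
    (hshift : ∀ (u : S → ℝ) (c : ℝ), F (u + fun _ => c) = F u + fun _ => c)
    {u u' : S → ℝ} {c : ℝ} (h : u ≤ u' + fun _ => c) :
    F u ≤ F u' + fun _ => c :=
  hshift u' c ▸ hmono h

lemma gain_le_of_span_fixPoint [Finite S] [Nonempty S] (hmono : Monotone F)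
    (hshift : ∀ (u : S → ℝ) (c : ℝ), F (u + fun _ => c) = F u + fun _ => c)
    {u u' : S → ℝ} {g g' : ℝ}
    (hfix : F u = u + fun _ => g) (hfix' : F u' = u' + fun _ => g') :
    g ≤ g' := by
  obtain ⟨s, hs⟩ := Finite.exists_max (fun t => u t - u' t)
  have hgap : u ≤ u' + fun _ => u s - u' s := fun t => by
    simp only [Pi.add_apply]
    linarith [hs t]
  have hs' := le_add_const_of_monotone_of_shift hmono hshift hgap s
  simp only [hfix, hfix', Pi.add_apply] at hs'
  linarith

end SpanFixPoint

/-- all span fix-points of a monotone, shift-equivariant map have the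
same growth (gain). -/
theorem stmt9 {S : Type*} [Fintype S] [Nonempty S]
    (F : (S → ℝ) → (S → ℝ)) (hmono : Monotone F)
    (hshift : ∀ (u : S → ℝ) (c : ℝ), F (u + fun _ => c) = F u + fun _ => c)
    (u u' : S → ℝ) (g g' : ℝ)
    (hfix : F u = u + fun _ => g) (hfix' : F u' = u' + fun _ => g') :
    g = g' :=
  le_antisymm (gain_le_of_span_fixPoint hmono hshift hfix hfix')
    (gain_le_of_span_fixPoint hmono hshift hfix' hfix)
end

section
/- Let S be a finite nonempty set and F : ℝ^S → ℝ^S a map that is monotone (u ≤ v pointwise implies F(u) ≤ F(v)) and satisfies F(u + λe) = F(u) + λe for all u and λ ∈ ℝ. Suppose u ∈ ℝ^S and g ∈ ℝ satisfy F(u) = u + g·e. Then for every v ∈ ℝ^S and every s ∈ S, the sequence (Fⁿ(v))(s)/n converges to g as n → ∞. -/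
/-!
A monotone map commuting with the addition of constants is nonexpansive for the sup norm: if
`‖v - w‖ ≤ c` then `v ≤ w + c·e`, hence `F v ≤ F w + c·e`, and symmetrically. So every orbit
`Fⁿ v` stays within `‖v - u‖` of the orbit `Fⁿ u = u + n g·e`, and dividing by `n` gives the limit.
-/

open Filter

section ShiftEquivariant

variable {ι : Type*} {F : (ι → ℝ) → (ι → ℝ)}

theorem iterate_eq_add_natCast_mul_of_eq_add_const
    (hshift : ∀ (w : ι → ℝ) (c : ℝ), F (w + fun _ => c) = F w + fun _ => c)
    {u : ι → ℝ} {g : ℝ} (hfix : F u = u + fun _ => g) (n : ℕ) :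
    F^[n] u = u + fun _ => n * g := by
  induction n with
  | zero => ext; simp
  | succ n ih =>
    rw [Function.iterate_succ_apply', ih, hshift, hfix]
    ext
    simp only [Pi.add_apply, Nat.cast_succ]
    ring

theorem le_add_const_dist [Fintype ι] (v w : ι → ℝ) : v ≤ w + fun _ => dist v w := fun i => by
  have h := (le_abs_self _).trans ((Real.dist_eq _ _).symm.le.trans (dist_le_pi_dist v w i))
  simp only [Pi.add_apply]
  linarith

theorem lipschitzWith_one_of_monotone_of_add_const [Fintype ι] (hmono : Monotone F)
    (hshift : ∀ (w : ι → ℝ) (c : ℝ), F (w + fun _ => c) = F w + fun _ => c) :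
    LipschitzWith 1 F := by
  refine LipschitzWith.of_dist_le_mul fun v w => ?_
  rw [NNReal.coe_one, one_mul, dist_pi_le_iff dist_nonneg]
  intro i
  have hvw := hmono (le_add_const_dist v w) i
  have hwv := hmono (le_add_const_dist w v) i
  rw [hshift, Pi.add_apply] at hvw hwv
  rw [dist_comm w v] at hwv
  rw [Real.dist_eq, abs_le]
  constructor <;> linarith

end ShiftEquivariant

theorem tendsto_div_natCast_of_abs_sub_mul_le {x : ℕ → ℝ} {g C : ℝ}
    (h : ∀ n : ℕ, |x n - n * g| ≤ C) : Tendsto (fun n : ℕ => x n / n) atTop (nhds g) := by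
  have hdev : Tendsto (fun n : ℕ => (x n - n * g) / n) atTop (nhds 0) :=
    squeeze_zero_norm
      (fun n => by rw [norm_div, Real.norm_eq_abs, Real.norm_natCast]; gcongr; exact h n)
      (tendsto_const_div_atTop_nhds_zero_nat C)
  rw [← zero_add g]
  refine (hdev.add_const g).congr' ?_
  filter_upwards [eventually_ne_atTop 0] with n hn
  field_simp
  ring

theorem stmt10_general {S : Type*} [Fintype S]
    (F : (S → ℝ) → (S → ℝ)) (hmono : Monotone F)
    (hshift : ∀ (u : S → ℝ) (c : ℝ), F (u + fun _ => c) = F u + fun _ => c)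
    (u : S → ℝ) (g : ℝ) (hfix : F u = u + fun _ => g)
    (v : S → ℝ) (s : S) :
    Tendsto (fun n : ℕ => F^[n] v s / (n : ℝ)) atTop (nhds g) := by
  have hlip := (lipschitzWith_one_of_monotone_of_add_const hmono hshift).iterate
  refine tendsto_div_natCast_of_abs_sub_mul_le (C := |u s| + dist v u) fun n => ?_
  have horbit : |F^[n] v s - F^[n] u s| ≤ dist v u := by
    rw [← Real.dist_eq]
    simpa using (dist_le_pi_dist _ _ s).trans ((hlip n).dist_le_mul v u)
  rw [iterate_eq_add_natCast_mul_of_eq_add_const hshift hfix, Pi.add_apply] at horbit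
  calc |F^[n] v s - n * g| = |(F^[n] v s - (u s + n * g)) + u s| := by ring_nf
    _ ≤ |u s| + dist v u := by linarith [abs_add_le (F^[n] v s - (u s + n * g)) (u s)]

/-- if `F` is monotone and shift-equivariant with a span fix-point
`F u = u + g·e`, then for every `v` and `s`, `Fⁿ(v)(s)/n → g`. -/
theorem stmt10 {S : Type*} [Fintype S] [Nonempty S]
    (F : (S → ℝ) → (S → ℝ)) (hmono : Monotone F)
    (hshift : ∀ (u : S → ℝ) (c : ℝ), F (u + fun _ => c) = F u + fun _ => c)
    (u : S → ℝ) (g : ℝ) (hfix : F u = u + fun _ => g)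
    (v : S → ℝ) (s : S) :
    Tendsto (fun n : ℕ => F^[n] v s / (n : ℝ)) atTop (nhds g) :=
  stmt10_general F hmono hshift u g hfix v s
end

section
/- Let S be a finite nonempty set and F : ℝ^S → ℝ^S a map that is monotone (u ≤ v pointwise implies F(u) ≤ F(v)) and satisfies F(u + λe) = F(u) + λe for all u and λ ∈ ℝ. Suppose u ∈ ℝ^S and g ∈ ℝ satisfy F(u) = u + g·e. If there exist h ∈ ℝ^S and g̃ ∈ ℝ with h + g̃·e ≤ F(h) (pointwise), then g̃ ≤ g. -/
/-! Shift `u` up by the least constant `c` with `h ≤ u + c·e`; equality then holds at some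
state `s`. Monotonicity and shift-equivariance give `h + g̃·e ≤ F h ≤ F (u + c·e) = u + (c + g)·e`,
and evaluating at `s` cancels `h s = u s + c`, leaving `g̃ ≤ g`. -/

theorem exists_le_add_const_eq_sub {S : Type*} [Finite S] [Nonempty S] (h u : S → ℝ) :
    ∃ s, h ≤ u + fun _ => h s - u s := by
  obtain ⟨s, hs⟩ := Finite.exists_max (h - u)
  refine ⟨s, fun x => ?_⟩
  have := hs x
  simp only [Pi.sub_apply, Pi.add_apply] at this ⊢
  linarith

/-- if `F` is monotone and shift-equivariant with a span fix-point
`F u = u + g·e`, and if `h + g̃·e ≤ F h` pointwise for some `h` and `g̃`, then `g̃ ≤ g`. -/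
theorem stmt11 {S : Type*} [Fintype S] [Nonempty S]
    (F : (S → ℝ) → (S → ℝ)) (hmono : Monotone F)
    (hshift : ∀ (u : S → ℝ) (c : ℝ), F (u + fun _ => c) = F u + fun _ => c)
    (u : S → ℝ) (g : ℝ) (hfix : F u = u + fun _ => g)
    (h : S → ℝ) (gt : ℝ) (hsub : (h + fun _ => gt) ≤ F h) :
    gt ≤ g := by
  obtain ⟨s, hle⟩ := exists_le_add_const_eq_sub h u
  have hchain : (h + fun _ => gt) ≤ u + fun _ => g + (h s - u s) :=
    calc (h + fun _ => gt) ≤ F h := hsub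
      _ ≤ F (u + fun _ => h s - u s) := hmono hle
      _ = u + fun _ => g + (h s - u s) := by
        rw [hshift, hfix, add_assoc]
        rfl
  have := hchain s
  simp only [Pi.add_apply] at this
  linarith
end

section
/- Let S be a finite nonempty set, q a probability vector on S, c₀ ≥ 0 a real, s ∈ S a fixed state, and c, d : S × S → ℝ. Let u, v ∈ ℝ^S satisfy sp(u) ≤ c₀, sp(v) ≤ c₀, and for every s' ∈ S: |u(s') − u(s) − c(s',s)| ≤ d(s',s) and |v(s') − v(s) − c(s',s)| ≤ d(s',s). Then V(q,u) ≤ V(q,v) + 8·c₀·Σ_{s' ∈ S} q(s')·d(s',s). -/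
/-- Variance of `u` under the probability vector `q`:
`V(q,u) = Σ_s q s · (u s - q·u)²`. -/
noncomputable def Var {S : Type*} [Fintype S] (q u : S → ℝ) : ℝ :=
  ∑ s, q s * (u s - ∑ s', q s' * u s') ^ 2

section

variable {S : Type*} [Fintype S] {q : S → ℝ}

lemma sum_mul_sub_weightedMean (hq1 : ∑ t, q t = 1) (u : S → ℝ) :
    ∑ t, q t * (u t - ∑ t', q t' * u t') = 0 := by
  simp only [mul_sub, Finset.sum_sub_distrib, ← Finset.sum_mul, hq1, one_mul, sub_self]

lemma Var_sub_Var_eq (hq1 : ∑ t, q t = 1) (u v : S → ℝ) (k : ℝ) :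
    Var q u - Var q v = ∑ t, q t * ((u t - ∑ t', q t' * u t') + (v t - ∑ t', q t' * v t')) *
      (u t - v t - k) := by
  set mu := ∑ t', q t' * u t'
  set mv := ∑ t', q t' * v t'
  have hmean : ∑ t, q t * ((u t - mu) + (v t - mv)) = 0 := by
    simp only [mul_add, Finset.sum_add_distrib, sum_mul_sub_weightedMean hq1, add_zero, mu, mv]
  calc Var q u - Var q v
      = ∑ t, (q t * ((u t - mu) + (v t - mv)) * (u t - v t - k)
          + q t * ((u t - mu) + (v t - mv)) * (k - (mu - mv))) := by
        simp only [Var, ← Finset.sum_sub_distrib]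
        exact Finset.sum_congr rfl fun t _ => by ring
    _ = _ := by rw [Finset.sum_add_distrib, ← Finset.sum_mul, hmean, zero_mul, add_zero]

lemma abs_sub_weightedMean_le_sp [Nonempty S] (hq0 : ∀ t, 0 ≤ q t) (hq1 : ∑ t, q t = 1)
    (u : S → ℝ) (t : S) : |u t - ∑ t', q t' * u t'| ≤ sp u := by
  have hbdd := Set.finite_range u
  have hle_sup (r : S) : u r ≤ ⨆ r', u r' := le_ciSup hbdd.bddAbove r
  have hinf_le (r : S) : ⨅ r', u r' ≤ u r := ciInf_le hbdd.bddBelow r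
  have hmean_le : ∑ t', q t' * u t' ≤ ⨆ r', u r' := by
    calc ∑ t', q t' * u t' ≤ ∑ t', q t' * ⨆ r', u r' :=
          Finset.sum_le_sum fun r _ => mul_le_mul_of_nonneg_left (hle_sup r) (hq0 r)
      _ = ⨆ r', u r' := by rw [← Finset.sum_mul, hq1, one_mul]
  have hle_mean : ⨅ r', u r' ≤ ∑ t', q t' * u t' := by
    calc ⨅ r', u r' = ∑ t', q t' * ⨅ r', u r' := by rw [← Finset.sum_mul, hq1, one_mul]
      _ ≤ ∑ t', q t' * u t' :=
          Finset.sum_le_sum fun r _ => mul_le_mul_of_nonneg_left (hinf_le r) (hq0 r)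
  rw [abs_le, sp]
  constructor <;> linarith [hle_sup t, hinf_le t]

lemma Var_le_Var_add_of_abs_sub_le [Nonempty S] (hq0 : ∀ t, 0 ≤ q t) (hq1 : ∑ t, q t = 1)
    {c0 k : ℝ} {u v δ : S → ℝ} (hspu : sp u ≤ c0) (hspv : sp v ≤ c0)
    (hδ : ∀ t, |u t - v t - k| ≤ δ t) :
    Var q u ≤ Var q v + 2 * c0 * ∑ t, q t * δ t := by
  have hterm (t : S) : q t * ((u t - ∑ t', q t' * u t') + (v t - ∑ t', q t' * v t')) *
      (u t - v t - k) ≤ 2 * c0 * (q t * δ t) := by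
    have hcentred : |(u t - ∑ t', q t' * u t') + (v t - ∑ t', q t' * v t')| ≤ 2 * c0 := by
      linarith [abs_add_le (u t - ∑ t', q t' * u t') (v t - ∑ t', q t' * v t'),
        abs_sub_weightedMean_le_sp hq0 hq1 u t, abs_sub_weightedMean_le_sp hq0 hq1 v t]
    calc _ ≤ q t * (|(u t - ∑ t', q t' * u t') + (v t - ∑ t', q t' * v t')| *
          |u t - v t - k|) := by
          rw [mul_assoc, ← abs_mul]
          exact mul_le_mul_of_nonneg_left (le_abs_self _) (hq0 t)
      _ ≤ q t * (2 * c0 * δ t) :=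
          mul_le_mul_of_nonneg_left
            (mul_le_mul hcentred (hδ t) (abs_nonneg _) ((abs_nonneg _).trans hcentred)) (hq0 t)
      _ = 2 * c0 * (q t * δ t) := by ring
  have := Finset.sum_le_sum fun t (_ : t ∈ Finset.univ) => hterm t
  rw [← Finset.mul_sum] at this
  linarith [Var_sub_Var_eq hq1 u v k]

end

/-- if `u, v` have span at most `c₀` and both satisfy the difference
constraints `|w s' - w s - c(s',s)| ≤ d(s',s)`, then
`V(q,u) ≤ V(q,v) + 8·c₀·Σ_{s'} q s'·d(s',s)`. -/
theorem stmt14 {S : Type*} [Fintype S] [Nonempty S]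
    (q : S → ℝ) (hq0 : ∀ s, 0 ≤ q s) (hq1 : ∑ s, q s = 1)
    (c0 : ℝ) (hc0 : 0 ≤ c0) (s : S) (c d : S → S → ℝ)
    (u v : S → ℝ) (hspu : sp u ≤ c0) (hspv : sp v ≤ c0)
    (hu : ∀ s', |u s' - u s - c s' s| ≤ d s' s)
    (hv : ∀ s', |v s' - v s - c s' s| ≤ d s' s) :
    Var q u ≤ Var q v + 8 * c0 * ∑ s', q s' * d s' s := by
  have hdiff (t : S) : |u t - v t - (u s - v s)| ≤ 2 * d t s := by
    calc |u t - v t - (u s - v s)| = |(u t - u s - c t s) - (v t - v s - c t s)| := by ring_nf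
      _ ≤ |u t - u s - c t s| + |v t - v s - c t s| := abs_sub _ _
      _ ≤ 2 * d t s := by linarith [hu t, hv t]
  have hD : 0 ≤ ∑ t, q t * d t s :=
    Finset.sum_nonneg fun t _ => mul_nonneg (hq0 t) ((abs_nonneg _).trans (hu t))
  have hsharp := Var_le_Var_add_of_abs_sub_le hq0 hq1 hspu hspv hdiff
  simp only [mul_left_comm (q _) 2, ← Finset.mul_sum] at hsharp
  linarith [mul_nonneg hc0 hD]
end
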